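/- For the ladder graph P_1[2] × P_2[n+1] with n ≥ 2, label the two copies of the path (with edge set {v_i v_{i+2} : 1 ≤ i ≤ n-1} ∪ {v_n v_{n+1}}) with odd labels 1,3,...,2n-1 on the first copy and even labels 2,4,...,2n on the second copy (in the same edge order), and label the rung edges ((u_1,v_i),(u_2,v_i)) with 2n+i for i = 1,...,n+1. Then the 2(n+1) vertex sums satisfy f⁺(u_1,v_1) < f⁺(u_2,v_1) < f⁺(u_1,v_2) < f⁺(u_2,v_2) < ... < f⁺(u_1,v_{n+1}) < f⁺(u_2,v_{n+1}), so the labeling is antimagic. -/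

import Mathlib

open Finset SimpleGraph

open scoped Classical in
/-- The sum of the labels of all edges incident to `v`. -/
noncomputable def vertexSum {V : Type*} [Fintype V] (G : SimpleGraph V)
    (f : Sym2 V → ℕ) (v : V) : ℕ :=
  ∑ w ∈ Finset.univ.filter (fun w => G.Adj v w), f s(v, w)

/-- The path on vertices `v_1, …, v_{n+1}` (0-based: `0, …, n`) with edge set
`{v_i v_{i+2} : 1 ≤ i ≤ n-1} ∪ {v_n v_{n+1}}`. -/
def reindexedPath (n : ℕ) : SimpleGraph (Fin (n + 1)) :=
  SimpleGraph.fromRel (fun a b => (a : ℕ) + 2 = (b : ℕ) ∨ ((a : ℕ) = n - 1 ∧ (b : ℕ) = n))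

/-- The ladder graph `P[2] □ P[n+1]`, with each path copy carrying the re-indexed
edge set `{v_i v_{i+2} : 1 ≤ i ≤ n-1} ∪ {v_n v_{n+1}}`. -/
def ladder (n : ℕ) : SimpleGraph (Fin 2 × Fin (n + 1)) :=
  pathGraph 2 □ reindexedPath n

/-!
With 0-based indices, the path edge `{i, j}` of copy `c` carries `2 min(i, j) + 1 + c` and the
rung at `i` carries `2n + i + 1`. Hence the vertex sum at `(c, i)` is `2n + i + 1` plus the labels
of the one or two path edges at `i`, namely `2n + 2 + c`, `2n + 5 + c`, `2n + 5i - 1 + 2c`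
(`2 ≤ i < n`) and `7n - 3 + 2c` (`i = n`). These values are strictly increasing in `2i + c`,
which enumerates the vertices in the order of the statement, so the vertex sums are distinct.
-/

open scoped Classical in
theorem vertexSum_boxProd {α β : Type*} [Fintype α] [Fintype β] (G : SimpleGraph α)
    (H : SimpleGraph β) (f : Sym2 (α × β) → ℕ) (a : α) (b : β) :
    vertexSum (G □ H) f (a, b) =
      ∑ a' ∈ univ.filter (G.Adj a), f s((a, b), (a', b)) +
        ∑ b' ∈ univ.filter (H.Adj b), f s((a, b), (a, b')) := by
  have hsplit : univ.filter ((G □ H).Adj (a, b)) =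
      univ.filter (G.Adj a) ×ˢ {b} ∪ {a} ×ˢ univ.filter (H.Adj b) := by
    ext ⟨a', b'⟩
    simp only [mem_filter, mem_univ, true_and, boxProd_adj, mem_union, mem_product,
      mem_singleton]
    aesop
  have hdisj : Disjoint (univ.filter (G.Adj a) ×ˢ {b}) ({a} ×ˢ univ.filter (H.Adj b)) :=
    disjoint_product.mpr (Or.inl (by simp))
  rw [vertexSum, hsplit, sum_union hdisj, sum_product, sum_product_right]
  simp only [sum_singleton]

theorem reindexedPath_adj {n : ℕ} {i j : Fin (n + 1)} :
    (reindexedPath n).Adj i j ↔ i ≠ j ∧ ((i : ℕ) + 2 = j ∨ (j : ℕ) + 2 = i ∨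
      ((i : ℕ) = n - 1 ∧ (j : ℕ) = n) ∨ ((j : ℕ) = n - 1 ∧ (i : ℕ) = n)) := by
  simp only [reindexedPath, fromRel_adj]
  tauto

open scoped Classical in
theorem filter_pathGraph_two_adj (u : Fin 2) : univ.filter ((pathGraph 2).Adj u) = {1 - u} := by
  ext v
  fin_cases u <;> fin_cases v <;> simp [pathGraph_adj]

def neighborLabelSum (n c i : ℕ) : ℕ :=
  if i = 0 then 1 + c else if i = 1 then 3 + c else if i < n then 4 * i - 2 + 2 * c
  else 4 * n - 4 + 2 * c

open scoped Classical in
theorem sum_filter_reindexedPath_adj {n : ℕ} (hn : 2 ≤ n) (c : ℕ) (i : Fin (n + 1)) :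
    ∑ j ∈ univ.filter ((reindexedPath n).Adj i), (2 * min (i : ℕ) j + 1 + c) =
      neighborLabelSum n c i := by
  have hfilter : ∀ s : Finset (Fin (n + 1)), (∀ j : Fin (n + 1), j ∈ s ↔
      (j : ℕ) ≠ i ∧ ((i : ℕ) + 2 = j ∨ (j : ℕ) + 2 = i ∨ ((i : ℕ) = n - 1 ∧ (j : ℕ) = n) ∨
        ((j : ℕ) = n - 1 ∧ (i : ℕ) = n))) → univ.filter ((reindexedPath n).Adj i) = s := by
    intro s hs
    ext j
    rw [hs, mem_filter, reindexedPath_adj]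
    simp only [mem_univ, true_and, ne_comm, ne_eq, Fin.ext_iff]
  unfold neighborLabelSum
  rcases (by omega : (i : ℕ) = 0 ∨ (i : ℕ) = 1 ∨ (2 ≤ (i : ℕ) ∧ (i : ℕ) < n) ∨ (i : ℕ) = n)
    with hi | hi | hi | hi
  · rw [hfilter {⟨2, by omega⟩} (by intro j; simp only [mem_singleton, Fin.ext_iff]; omega),
      sum_singleton]
    dsimp only
    split_ifs; omega
  · rw [hfilter {⟨min 3 n, by omega⟩} (by intro j; simp only [mem_singleton, Fin.ext_iff]; omega),
      sum_singleton]
    dsimp only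
    split_ifs <;> omega
  · rw [hfilter {⟨i - 2, by omega⟩, ⟨min (i + 2) n, by omega⟩}
      (by intro j; simp only [mem_insert, mem_singleton, Fin.ext_iff]; omega),
      sum_pair (by simp only [ne_eq, Fin.ext_iff]; omega)]
    dsimp only
    split_ifs <;> omega
  · rw [hfilter {⟨n - 2, by omega⟩, ⟨n - 1, by omega⟩}
      (by intro j; simp only [mem_insert, mem_singleton, Fin.ext_iff]; omega),
      sum_pair (by simp only [ne_eq, Fin.ext_iff]; omega)]
    dsimp only
    split_ifs <;> omega

theorem label_eq_of_reindexedPath_adj {n : ℕ} (f : Sym2 (Fin 2 × Fin (n + 1)) → ℕ) (c : Fin 2)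
    (hstep : ∀ a b : Fin (n + 1), (a : ℕ) + 2 = b → f s((c, a), (c, b)) = 2 * a + 1 + c)
    (hlast : ∀ a : Fin (n + 1), (a : ℕ) + 1 = n → f s((c, a), (c, Fin.last n)) = 2 * n - 1 + c)
    {i j : Fin (n + 1)} (hij : (reindexedPath n).Adj i j) :
    f s((c, i), (c, j)) = 2 * min (i : ℕ) j + 1 + c := by
  wlog hlt : (i : ℕ) < j generalizing i j
  · rw [Sym2.eq_swap, min_comm]
    exact this hij.symm (by have := hij.ne; rw [Ne, Fin.ext_iff] at this; omega)
  rw [reindexedPath_adj] at hij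
  rcases hij.2 with h | h | ⟨hi, hj⟩ | h
  · rw [hstep i j h]
    omega
  · omega
  · obtain rfl : j = Fin.last n := Fin.ext hj
    rw [hlast i (by omega)]
    omega
  · omega

-- The labeling of the theorem in closed form (0-based indices); the last path edge `{n - 1, n}`
-- fits the same formula as the others.
structure IsLadderLabeling (n : ℕ) (f : Sym2 (Fin 2 × Fin (n + 1)) → ℕ) : Prop where
  path : ∀ (c : Fin 2) (i j : Fin (n + 1)), (reindexedPath n).Adj i j →
    f s((c, i), (c, j)) = 2 * min (i : ℕ) j + 1 + c
  rung : ∀ i : Fin (n + 1), f s((0, i), (1, i)) = 2 * n + i + 1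

namespace IsLadderLabeling

variable {n : ℕ} {f : Sym2 (Fin 2 × Fin (n + 1)) → ℕ}

open scoped Classical in
theorem vertexSum_eq (hf : IsLadderLabeling n f) (hn : 2 ≤ n) (u : Fin 2) (i : Fin (n + 1)) :
    vertexSum (ladder n) f (u, i) = 2 * n + i + 1 + neighborLabelSum n u i := by
  have hrung : f s((u, i), (1 - u, i)) = 2 * n + i + 1 := by
    fin_cases u
    · exact hf.rung i
    · rw [Sym2.eq_swap]
      exact hf.rung i
  rw [ladder, vertexSum_boxProd, filter_pathGraph_two_adj, sum_singleton, hrung,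
    sum_congr rfl fun j hj => hf.path u i j (mem_filter.mp hj).2,
    sum_filter_reindexedPath_adj hn]

theorem vertexSum_lt (hf : IsLadderLabeling n f) (hn : 2 ≤ n) {p q : Fin 2 × Fin (n + 1)}
    (hpq : 2 * (p.2 : ℕ) + p.1 < 2 * q.2 + q.1) :
    vertexSum (ladder n) f p < vertexSum (ladder n) f q := by
  rw [hf.vertexSum_eq hn, hf.vertexSum_eq hn]
  have := p.1.isLt
  have := q.1.isLt
  have := q.2.isLt
  unfold neighborLabelSum
  split_ifs <;> omega

theorem vertexSum_injective (hf : IsLadderLabeling n f) (hn : 2 ≤ n) :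
    Function.Injective (vertexSum (ladder n) f) := by
  intro p q hpq
  by_contra hne
  have hrank : 2 * (p.2 : ℕ) + p.1 ≠ 2 * q.2 + q.1 := by
    simp only [Prod.ext_iff, Fin.ext_iff] at hne
    omega
  rcases hrank.lt_or_gt with h | h
  · exact (hf.vertexSum_lt hn h).ne hpq
  · exact (hf.vertexSum_lt hn h).ne' hpq

end IsLadderLabeling

/-- For the ladder `P[2] □ P[n+1]` (`n ≥ 2`): label the first path copy with odd labels
`1, 3, …, 2n-1`, the second copy with even labels `2, 4, …, 2n` (same edge order),
and the rung `((u_1,v_i),(u_2,v_i))` with `2n + i`.  Then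
`f⁺(u_1,v_1) < f⁺(u_2,v_1) < f⁺(u_1,v_2) < … < f⁺(u_1,v_{n+1}) < f⁺(u_2,v_{n+1})`,
so the labeling is antimagic. -/
theorem ladder_labeling_antimagic (n : ℕ) (hn : 2 ≤ n)
    (f : Sym2 (Fin 2 × Fin (n + 1)) → ℕ)
    (hf1 : ∀ i : ℕ, ∀ _h1 : 1 ≤ i, ∀ _h2 : i ≤ n - 1,
      f s(((0 : Fin 2), (⟨i - 1, by omega⟩ : Fin (n + 1))),
          ((0 : Fin 2), (⟨i + 1, by omega⟩ : Fin (n + 1)))) = 2 * i - 1)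
    (hf2 : f s(((0 : Fin 2), (⟨n - 1, by omega⟩ : Fin (n + 1))),
          ((0 : Fin 2), (⟨n, by omega⟩ : Fin (n + 1)))) = 2 * n - 1)
    (hf3 : ∀ i : ℕ, ∀ _h1 : 1 ≤ i, ∀ _h2 : i ≤ n - 1,
      f s(((1 : Fin 2), (⟨i - 1, by omega⟩ : Fin (n + 1))),
          ((1 : Fin 2), (⟨i + 1, by omega⟩ : Fin (n + 1)))) = 2 * i)
    (hf4 : f s(((1 : Fin 2), (⟨n - 1, by omega⟩ : Fin (n + 1))),
          ((1 : Fin 2), (⟨n, by omega⟩ : Fin (n + 1)))) = 2 * n)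
    (hf5 : ∀ i : ℕ, ∀ _h1 : 1 ≤ i, ∀ _h2 : i ≤ n + 1,
      f s(((0 : Fin 2), (⟨i - 1, by omega⟩ : Fin (n + 1))),
          ((1 : Fin 2), (⟨i - 1, by omega⟩ : Fin (n + 1)))) = 2 * n + i) :
    (∀ i : Fin (n + 1), vertexSum (ladder n) f (0, i) < vertexSum (ladder n) f (1, i)) ∧
    (∀ i : ℕ, ∀ _h : i < n,
      vertexSum (ladder n) f (1, ⟨i, by omega⟩) <
        vertexSum (ladder n) f (0, ⟨i + 1, by omega⟩)) ∧
    Function.Injective (vertexSum (ladder n) f) := by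
  have hf : IsLadderLabeling n f := by
    refine ⟨fun c i j hij => ?_, fun i => ?_⟩
    · fin_cases c
      · refine label_eq_of_reindexedPath_adj f 0 (fun a b hab => ?_) (fun a ha => ?_) hij
        · convert hf1 (a + 1) (by omega) (by omega) using 4 <;> simp [Fin.ext_iff] <;> omega
        · convert hf2 using 4 <;> simp [Fin.ext_iff]; omega
      · refine label_eq_of_reindexedPath_adj f 1 (fun a b hab => ?_) (fun a ha => ?_) hij
        · convert hf3 (a + 1) (by omega) (by omega) using 4 <;> simp [Fin.ext_iff] <;> omega
        · convert hf4 using 4 <;> simp [Fin.ext_iff] <;> omega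
    · simpa [add_assoc] using hf5 (i + 1) (by omega) (by omega)
  refine ⟨fun i => hf.vertexSum_lt hn ?_, fun i _ => hf.vertexSum_lt hn ?_,
    hf.vertexSum_injective hn⟩
  · simp
  · simp only [Fin.val_one, Fin.val_zero]
    omega
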